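/- Let c₀ > 2 or c₀ < 0, set C₀ = √((c₀−2)/c₀) and α(t) = −(c₀C₀/2)(2πt+k). Then X(t) = 2 arccot(C₀ tan(α(t))) satisfies dX/dt = 2π cos X + 2π(c₀ − 1) wherever tan(α(t)) is defined. -/

import Mathlib

open Real

noncomputable def arccot (y : ℝ) : ℝ := π / 2 - Real.arctan y

/-! Writing `X = 2 arccot y`, the equation `X' = ω cos X + ω (c - 1)` becomes the Riccati equation
`y' = -(ω/2) (c y² + c - 2)`. When `c C² = c - 2`, the right-hand side at `y = C tan α` equals
`-(ω/2) (c - 2) / cos² α`, which is the derivative of `C tan α` for `α' = -(ω/2) c C`. -/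

theorem hasDerivAt_arccot (y : ℝ) : HasDerivAt arccot (-(1 / (1 + y ^ 2))) y :=
  (Real.hasDerivAt_arctan y).const_sub (π / 2)

theorem cos_two_mul_arccot (y : ℝ) : cos (2 * arccot y) = (y ^ 2 - 1) / (y ^ 2 + 1) := by
  rw [arccot, show 2 * (π / 2 - arctan y) = π - 2 * arctan y by ring, cos_pi_sub, cos_two_mul,
    cos_arctan, div_pow, one_pow, sq_sqrt (by positivity)]
  field_simp
  ring

theorem hasDerivAt_two_mul_arccot_of_riccati {ω c t : ℝ} {y : ℝ → ℝ}
    (hy : HasDerivAt y (-(ω / 2) * (c * y t ^ 2 + c - 2)) t) :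
    HasDerivAt (fun s => 2 * arccot (y s)) (ω * cos (2 * arccot (y t)) + ω * (c - 1)) t := by
  refine (((hasDerivAt_arccot (y t)).comp t hy).const_mul 2).congr_deriv ?_
  rw [cos_two_mul_arccot]
  field_simp
  ring

theorem hasDerivAt_const_mul_tan_riccati {ω c C t : ℝ} {α : ℝ → ℝ} (hC : c * C ^ 2 = c - 2)
    (hα : HasDerivAt α (-(ω / 2) * c * C) t) (hcos : cos (α t) ≠ 0) :
    HasDerivAt (fun s => C * tan (α s)) (-(ω / 2) * (c * (C * tan (α t)) ^ 2 + c - 2)) t := by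
  refine (((Real.hasDerivAt_tan hcos).comp t hα).const_mul C).congr_deriv ?_
  have hsc := sin_sq_add_cos_sq (α t)
  rw [tan_eq_sin_div_cos]
  field_simp
  linear_combination ω * ((sin (α t) ^ 2 - 1) * hC + (c - 2) * hsc)

theorem X_solves_ode_c0_outside (c₀ k : ℝ) (hc₀ : c₀ * (c₀ - 2) > 0)
    (C₀ : ℝ) (hC₀ : C₀ = Real.sqrt ((c₀ - 2) / c₀))
    (α : ℝ → ℝ) (hα : ∀ t, α t = -(c₀ * C₀ / 2) * (2 * π * t + k))
    (X : ℝ → ℝ) (hX : ∀ t, X t = 2 * arccot (C₀ * Real.tan (α t))) :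
    ∀ t : ℝ, Real.cos (α t) ≠ 0 →
      HasDerivAt X (2 * π * Real.cos (X t) + 2 * π * (c₀ - 1)) t := by
  intro t hcos
  have hc₀_ne : c₀ ≠ 0 := by rintro rfl; simp at hc₀
  have hratio : 0 ≤ (c₀ - 2) / c₀ := by
    rw [show (c₀ - 2) / c₀ = c₀ * (c₀ - 2) / c₀ ^ 2 by field_simp]
    exact div_nonneg hc₀.le (sq_nonneg c₀)
  have hC : c₀ * C₀ ^ 2 = c₀ - 2 := by
    rw [hC₀, sq_sqrt hratio]; field_simp
  have hα' : HasDerivAt α (-(2 * π / 2) * c₀ * C₀) t := by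
    rw [funext hα]
    refine ((((hasDerivAt_id t).const_mul (2 * π)).add_const k).const_mul
      (-(c₀ * C₀ / 2))).congr_deriv ?_
    ring
  rw [hX t, funext hX]
  exact hasDerivAt_two_mul_arccot_of_riccati (hasDerivAt_const_mul_tan_riccati hC hα' hcos)
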